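/- arXiv:math/0110024 — 2 statements merged into one kernel-verified Lean document; each statement's English description precedes it below -/
import Mathlib

section
/- Let b ∈ P, c ∈ P with π_b = s_i π_c, l(π_b) = l(π_c) + 1, for a simple reflection s_i with i > 0 (nonaffine). Then b = s_i(c), b_− = c_−, and u_b = u_c s_i. Moreover (c_−, α∨) = (c, αᵢ∨) > 0 for α = u_c(αᵢ) ∈ R_−. -/
open scoped RealInnerProductSpace Pointwise BigOperators

noncomputable section

/-- Euclidean `n`-space, the ambient space of the root system. -/
abbrev V (n : ℕ) := EuclideanSpace ℝ (Fin n)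

/-- An element `w ∘ b'` of the extended affine Weyl group `Ŵ = W ⋉ P'`:
`w` is the (finite) Weyl-group part, `b` the translation part. -/
structure ExtElem (n : ℕ) where
  w : V n ≃ₗᵢ[ℝ] V n
  b : V n

namespace ExtElem

variable {n : ℕ}

/-- The identity element of `Ŵ`. -/
def one : ExtElem n := ⟨LinearIsometryEquiv.refl ℝ (V n), 0⟩

/-- Multiplication in `Ŵ`: `(w₁ b₁')·(w₂ b₂') = (w₁w₂)((w₂⁻¹ b₁ + b₂)')`. -/
def mul (x y : ExtElem n) : ExtElem n := ⟨y.w.trans x.w, y.w.symm x.b + y.b⟩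

/-- Inversion in `Ŵ`. -/
def inv (x : ExtElem n) : ExtElem n := ⟨x.w.symm, -(x.w x.b)⟩

/-- The action of `Ŵ` on affine roots `[z, ζ]`:  `(w b')([z,ζ]) = [w z, ζ − (z,b)]`. -/
def act (x : ExtElem n) (p : V n × ℝ) : V n × ℝ := (x.w p.1, p.2 - ⟪p.1, x.b⟫)

/-- The affine action of `Ŵ` on `ℝⁿ`: `(w b')((z)) = w(z + b)`. -/
def affAct (x : ExtElem n) (z : V n) : V n := x.w (z + x.b)

/-- A Weyl group element `w` viewed in `Ŵ`. -/
def we (u : V n ≃ₗᵢ[ℝ] V n) : ExtElem n := ⟨u, 0⟩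

/-- A translation `b'` viewed in `Ŵ`. -/
def tr (b : V n) : ExtElem n := ⟨LinearIsometryEquiv.refl ℝ (V n), b⟩

end ExtElem

variable {n : ℕ}

/-- `ν_α = (α,α)/2`. -/
def nuv (α : V n) : ℝ := ⟪α, α⟫ / 2

/-- The coroot pairing `(b, α∨) = 2(b,α)/(α,α)`. -/
def pairv (b α : V n) : ℝ := 2 * ⟪b, α⟫ / ⟪α, α⟫

/-- The positive affine roots `R̃₊ = R₊ ∪ {[α, ν_α j] : α ∈ R, j > 0}`, realized as
pairs `(α, m)` with `m ∈ ν_α ℤ`. -/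
def AffPlus (R Rplus : Set (V n)) : Set (V n × ℝ) :=
  {p | p.1 ∈ R ∧ (∃ j : ℤ, p.2 = nuv p.1 * j) ∧ (0 < p.2 ∨ (p.2 = 0 ∧ p.1 ∈ Rplus))}

/-- `λ(ŵ) = R̃₊ ∩ ŵ⁻¹(R̃₋)`. -/
def lamSet (R Rplus : Set (V n)) (x : ExtElem n) : Set (V n × ℝ) :=
  AffPlus R Rplus ∩ {p | x.act p ∈ -AffPlus R Rplus}

/-- The length `l(ŵ) = |λ(ŵ)|`. -/
noncomputable def len (R Rplus : Set (V n)) (x : ExtElem n) : ℕ :=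
  (lamSet R Rplus x).ncard

/-- Membership in the weight lattice `P`: `(α∨, b) ∈ ℤ` for all roots. -/
def inLat (R : Set (V n)) (b : V n) : Prop :=
  ∀ α ∈ R, ∃ m : ℤ, ⟪α, b⟫ = nuv α * m

/-- Reflections `s_α`, `α ∈ R`. -/
def IsReflection (R : Set (V n)) (g : V n ≃ₗᵢ[ℝ] V n) : Prop :=
  ∃ α ∈ R, ∀ z, g z = z - pairv z α • α

/-- The Weyl group `W`, generated by the reflections `s_α`, `α ∈ R`. -/
def Weyl (R : Set (V n)) : Subgroup (V n ≃ₗᵢ[ℝ] V n) :=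
  Subgroup.closure {g | IsReflection R g}

/-- `π_b = b·u_b⁻¹ = u_b⁻¹ ∘ (u_b b)' ∈ Ŵ` for `u ∈ W`. -/
def piE (u : V n ≃ₗᵢ[ℝ] V n) (b : V n) : ExtElem n := ⟨u.symm, u b⟩

/-- `u = u_b`: the shortest element of `W` with `u(b) = b₋ ∈ P₋`, characterized by
`u(b)` antidominant together with `α ∈ λ(u) ⇒ (α, b) ≠ 0`. -/
def IsUb (R Rplus : Set (V n)) (b : V n) (u : V n ≃ₗᵢ[ℝ] V n) : Prop :=
  u ∈ Weyl R ∧ (∀ α ∈ Rplus, ⟪u b, α⟫ ≤ 0) ∧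
    ∀ α ∈ Rplus, u α ∈ -Rplus → ⟪α, b⟫ ≠ 0

end

section AuxLemmas

variable {n : ℕ}

lemma inner_self_pos' {α : V n} (h : α ≠ 0) : 0 < ⟪α, α⟫ :=
  lt_of_le_of_ne real_inner_self_nonneg (fun h' => h (inner_self_eq_zero.mp h'.symm))

lemma pairv_self {α : V n} (h : α ≠ 0) : pairv α α = 2 := by
  unfold pairv
  rw [mul_div_assoc, div_self (ne_of_gt (inner_self_pos' h)), mul_one]

lemma pairv_refl_apply {α : V n} (h : α ≠ 0) (z : V n) :
    pairv (z - pairv z α • α) α = - pairv z α := by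
  have ha := inner_self_pos' h
  unfold pairv
  rw [inner_sub_left, real_inner_smul_left]
  set x := ⟪z, α⟫ with hx
  set a := ⟪α, α⟫ with haa
  field_simp
  ring

lemma refl_invol {α : V n} (h : α ≠ 0) (g : V n ≃ₗᵢ[ℝ] V n)
    (hg : ∀ z, g z = z - pairv z α • α) (z : V n) : g (g z) = z := by
  rw [hg, hg, pairv_refl_apply h, neg_smul, sub_neg_eq_add, sub_add_cancel]

lemma refl_symm_eq {α : V n} (h : α ≠ 0) (g : V n ≃ₗᵢ[ℝ] V n)
    (hg : ∀ z, g z = z - pairv z α • α) (z : V n) : g.symm z = g z := by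
  conv_lhs => rw [← refl_invol h g hg z]
  exact g.symm_apply_apply _

lemma refl_adj {α : V n} (h : α ≠ 0) (g : V n ≃ₗᵢ[ℝ] V n)
    (hg : ∀ z, g z = z - pairv z α • α) (x y : V n) : ⟪g x, y⟫ = ⟪x, g y⟫ := by
  have ha := inner_self_pos' h
  rw [hg, hg]
  unfold pairv
  rw [inner_sub_left, inner_sub_right, real_inner_smul_left, real_inner_smul_right,
    real_inner_comm α y]
  set p := ⟪x, y⟫
  set q := ⟪x, α⟫
  set r := ⟪y, α⟫
  set a := ⟪α, α⟫
  field_simp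

lemma weyl_preserves {R : Set (V n)} (h0 : (0 : V n) ∉ R)
    (hrefl : ∀ α ∈ R, ∀ β ∈ R, β - pairv β α • α ∈ R) :
    ∀ g ∈ Weyl R, (∀ α ∈ R, g α ∈ R) ∧ (∀ α ∈ R, g.symm α ∈ R) := by
  intro g hg
  refine Subgroup.closure_induction
    (p := fun g _ => (∀ α ∈ R, g α ∈ R) ∧ (∀ α ∈ R, g.symm α ∈ R)) ?_ ?_ ?_ ?_ hg
  · rintro x ⟨α, hα, hx⟩
    have hα0 : α ≠ 0 := fun h => h0 (h ▸ hα)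
    constructor
    · intro β hβ; rw [hx]; exact hrefl α hα β hβ
    · intro β hβ; rw [refl_symm_eq hα0 x hx, hx]; exact hrefl α hα β hβ
  · exact ⟨fun α hα => hα, fun α hα => hα⟩
  · rintro x y _ _ ⟨hx1, hx2⟩ ⟨hy1, hy2⟩
    exact ⟨fun α hα => hx1 _ (hy1 _ hα), fun α hα => hy2 _ (hx2 _ hα)⟩
  · rintro x _ ⟨h1, h2⟩
    exact ⟨fun α hα => h2 α hα, fun α hα => h1 α hα⟩

lemma nuv_neg (x : V n) : nuv (-x) = nuv x := by
  unfold nuv; rw [inner_neg_neg]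

lemma nuv_map (g : V n ≃ₗᵢ[ℝ] V n) (x : V n) : nuv (g x) = nuv x := by
  unfold nuv; rw [LinearIsometryEquiv.inner_map_map]

lemma mem_AffPlus_iff {R Rplus : Set (V n)} (z : V n) (t : ℝ) :
    ((z, t) : V n × ℝ) ∈ AffPlus R Rplus ↔
      z ∈ R ∧ (∃ j : ℤ, t = nuv z * j) ∧ (0 < t ∨ (t = 0 ∧ z ∈ Rplus)) := Iff.rfl

end AuxLemmas

lemma simple_perm {n : ℕ} {R Rplus : Set (V n)}
    (hR : R = Rplus ∪ (-Rplus)) (h0 : (0 : V n) ∉ R)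
    (hrefl : ∀ α ∈ R, ∀ β ∈ R, β - pairv β α • α ∈ R)
    (hcart : ∀ α ∈ R, ∀ β ∈ R, ∃ m : ℤ, pairv β α = m)
    (v : V n) (hv : ∀ α ∈ Rplus, 0 < ⟪v, α⟫)
    (αi : V n) (hαi : αi ∈ Rplus)
    (hsimple : ∀ β ∈ Rplus, ∀ γ ∈ Rplus, αi ≠ β + γ)
    {δ : V n} (hδ : δ ∈ Rplus) (hsδ : δ - pairv δ αi • αi ∈ -Rplus) :
    δ = αi ∨ δ = (2 : ℝ) • αi := by
  have hαiR : αi ∈ R := by rw [hR]; exact Or.inl hαi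
  have hδR : δ ∈ R := by rw [hR]; exact Or.inl hδ
  have hα0 : αi ≠ 0 := fun h => h0 (h ▸ hαiR)
  have hδ0 : δ ≠ 0 := fun h => h0 (h ▸ hδR)
  have ha : 0 < ⟪αi, αi⟫ := inner_self_pos' hα0
  have hd : 0 < ⟪δ, δ⟫ := inner_self_pos' hδ0
  obtain ⟨k, hk⟩ := hcart αi hαiR δ hδR
  obtain ⟨l, hl⟩ := hcart δ hδR αi hαiR
  have he : 2 * ⟪δ, αi⟫ = (k : ℝ) * ⟪αi, αi⟫ := by
    have h := hk; unfold pairv at h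
    rw [div_eq_iff (ne_of_gt ha)] at h
    linarith
  have he2 : 2 * ⟪δ, αi⟫ = (l : ℝ) * ⟪δ, δ⟫ := by
    have h := hl; unfold pairv at h
    rw [div_eq_iff (ne_of_gt hd), real_inner_comm δ αi] at h
    linarith
  have hγmem : (k : ℝ) • αi - δ ∈ Rplus := by
    have h1 : -(δ - pairv δ αi • αi) ∈ Rplus := Set.mem_neg.mp hsδ
    rw [neg_sub, hk] at h1
    exact h1
  have hvα : 0 < ⟪v, αi⟫ := hv _ hαi
  have hvδ : 0 < ⟪v, δ⟫ := hv _ hδ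
  have hvγ : 0 < ⟪v, (k : ℝ) • αi - δ⟫ := hv _ hγmem
  rw [inner_sub_right, real_inner_smul_right] at hvγ
  have hk1 : 1 ≤ k := by
    by_contra h
    push_neg at h
    have hk0 : (k : ℝ) ≤ 0 := by exact_mod_cast Int.lt_add_one_iff.mp h
    nlinarith
  have hl1 : 1 ≤ l := by
    by_contra h
    push_neg at h
    have hl0 : (l : ℝ) ≤ 0 := by exact_mod_cast Int.lt_add_one_iff.mp h
    have hkR : (1 : ℝ) ≤ (k : ℝ) := by exact_mod_cast hk1
    nlinarith
  have hcs : ⟪δ, αi⟫ * ⟪δ, αi⟫ ≤ ⟪δ, δ⟫ * ⟪αi, αi⟫ := real_inner_mul_inner_self_le δ αi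
  have h4e : 4 * (⟪δ, αi⟫ * ⟪δ, αi⟫) = (k : ℝ) * (l : ℝ) * (⟪αi, αi⟫ * ⟪δ, δ⟫) := by
    linear_combination ((l : ℝ) * ⟪δ, δ⟫) * he + (2 * ⟪δ, αi⟫) * he2
  have hkl4 : k * l ≤ 4 := by
    have : ((k * l : ℤ) : ℝ) ≤ 4 := by push_cast; nlinarith [mul_pos ha hd, hcs, h4e]
    exact_mod_cast this
  -- the case k = 1 is impossible
  have hknot1 : k ≠ 1 := by
    intro h
    subst h
    refine hsimple δ hδ _ hγmem ?_
    push_cast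
    module
  -- helper: if l = 1 then δ - αi ∈ Rplus
  have hlone : l = 1 → δ - αi ∈ Rplus := by
    intro h
    subst h
    have hεR : αi - δ ∈ R := by
      have h2 := hrefl δ hδR αi hαiR
      rw [hl] at h2
      push_cast at h2
      rw [one_smul] at h2
      exact h2
    rw [hR] at hεR
    rcases hεR with hε | hε
    · exact absurd (by module : αi = (αi - δ) + δ) (hsimple _ hε δ hδ)
    · have := Set.mem_neg.mp hε
      rw [neg_sub] at this
      exact this
  rcases (by omega : k * l = 4 ∨ k * l ≤ 3) with hkl | hkl
  · -- proportional case : δ = (k/2) • αi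
    have hδeq : δ = ((k : ℝ) / 2) • αi := by
      have hz : ⟪δ - ((k : ℝ) / 2) • αi, δ - ((k : ℝ) / 2) • αi⟫ = 0 := by
        rw [inner_sub_left, inner_sub_right, inner_sub_right, real_inner_smul_left,
          real_inner_smul_left, real_inner_smul_right, real_inner_smul_right,
          real_inner_comm δ αi]
        have hklR : ((k : ℝ)) * ((l : ℝ)) = 4 := by exact_mod_cast hkl
        set e := ⟪δ, αi⟫
        set a := ⟪αi, αi⟫
        set d := ⟪δ, δ⟫
        linear_combination (-(k : ℝ) / 4) * he + (-(k : ℝ) / 4) * he2 + (-d / 4) * hklR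
      have := inner_self_eq_zero.mp hz
      rw [sub_eq_zero] at this
      exact this
    have hk4 : k ≤ 4 := by nlinarith
    interval_cases k
    · exact absurd rfl hknot1
    · left; rw [hδeq]; norm_num
    · omega
    · right; rw [hδeq]; norm_num
  · -- non-proportional case
    have hk2 : 2 ≤ k := by omega
    have hl' : l = 1 := by nlinarith
    have hδ' : δ - αi ∈ Rplus := hlone hl'
    have hδ'R : δ - αi ∈ R := by rw [hR]; exact Or.inl hδ'
    have hk3 : k ≤ 3 := by nlinarith
    subst hl'
    exfalso
    interval_cases k
    · -- k = 2
      exact hsimple _ hγmem _ hδ' (by push_cast; module)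
    · -- k = 3
      have hea : 2 * ⟪δ, αi⟫ = 3 * ⟪αi, αi⟫ := by
        rw [he]; norm_num
      have hda : ⟪δ, δ⟫ = 3 * ⟪αi, αi⟫ := by
        have h2 := he2
        push_cast at h2
        linarith
      have hnum : 2 * ⟪αi, δ - αi⟫ = ⟪αi, αi⟫ := by
        rw [inner_sub_right, real_inner_comm δ αi]
        linarith
      have hden : ⟪δ - αi, δ - αi⟫ = ⟪αi, αi⟫ := by
        rw [real_inner_sub_sub_self]
        linarith
      have hp1 : pairv αi (δ - αi) = 1 := by
        unfold pairv
        rw [hden]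
        rw [div_eq_one_iff_eq (ne_of_gt ha)]
        linarith
      have hζR := hrefl (δ - αi) hδ'R αi hαiR
      rw [hp1, one_smul] at hζR
      rw [hR] at hζR
      rcases hζR with hζ | hζ
      · exact hsimple _ hζ _ hδ' (by module)
      · have h2 : δ - (2 : ℝ) • αi ∈ Rplus := by
          have h3 := Set.mem_neg.mp hζ
          rw [show -(αi - (δ - αi)) = δ - (2 : ℝ) • αi from by module] at h3
          exact h3
        exact hsimple _ hγmem _ h2 (by push_cast; module)

set_option maxHeartbeats 1000000 in
/-- Let `b, c ∈ P` with `π_b = s_i π_c` and `l(π_b) = l(π_c) + 1` for a nonaffine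
simple reflection `s_i` (`i > 0`).  Then `b = s_i(c)`, `b₋ = c₋`, `u_b = u_c s_i`, and
for `α = u_c(αᵢ) ∈ R₋` one has `(c₋, α∨) = (c, αᵢ∨) > 0`. -/
theorem pi_simple_step_nonaffine (n : ℕ) (R Rplus : Set (V n))
    (hfin : R.Finite) (hR : R = Rplus ∪ (-Rplus)) (hdisj : Disjoint Rplus (-Rplus))
    (h0 : (0 : V n) ∉ R)
    (hrefl : ∀ α ∈ R, ∀ β ∈ R, β - pairv β α • α ∈ R)
    (hcart : ∀ α ∈ R, ∀ β ∈ R, ∃ m : ℤ, pairv β α = m)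
    (hpos : ∃ v : V n, ∀ α ∈ Rplus, 0 < ⟪v, α⟫)
    -- the simple root `αᵢ` and the corresponding simple reflection `s = s_i`, `i > 0`
    (αi : V n) (hαi : αi ∈ Rplus)
    (hαi_simple : ∀ β ∈ Rplus, ∀ γ ∈ Rplus, αi ≠ β + γ)
    (s : V n ≃ₗᵢ[ℝ] V n) (hs : ∀ z, s z = z - pairv z αi • αi)
    (b c : V n) (hb : inLat R b) (hc : inLat R c)
    (ub uc : V n ≃ₗᵢ[ℝ] V n)
    (hub : IsUb R Rplus b ub) (huc : IsUb R Rplus c uc)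
    (hmul : piE ub b = (ExtElem.we s).mul (piE uc c))
    (hlen : len R Rplus (piE ub b) = len R Rplus (piE uc c) + 1) :
    b = s c ∧
    ub b = uc c ∧
    (∀ z, ub z = uc (s z)) ∧
    uc αi ∈ -Rplus ∧
    pairv (uc c) (uc αi) = pairv c αi ∧
    0 < pairv c αi := by
  classical
  have hαiR : αi ∈ R := by rw [hR]; exact Or.inl hαi
  have hα0 : αi ≠ 0 := fun h => h0 (h ▸ hαiR)
  have ha : 0 < ⟪αi, αi⟫ := inner_self_pos' hα0
  obtain ⟨v, hv⟩ := hpos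
  have hnegR : ∀ x ∈ R, -x ∈ R := by
    intro x hx
    have hx0 : x ≠ 0 := fun h => h0 (h ▸ hx)
    have h1 := hrefl x hx x hx
    rw [pairv_self hx0, show x - (2 : ℝ) • x = -x from by module] at h1
    exact h1
  have hsignpos : ∀ x ∈ R, 0 < ⟪v, x⟫ → x ∈ Rplus := by
    intro x hx hvx
    rw [hR] at hx
    rcases hx with h | h
    · exact h
    · exfalso
      have h2 := hv _ (Set.mem_neg.mp h)
      rw [inner_neg_right] at h2
      linarith
  have hsααi : s αi = -αi := by
    rw [hs, pairv_self hα0]; module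
  have hs2 : ∀ z, s (s z) = z := refl_invol hα0 s hs
  have hsadj : ∀ x y : V n, ⟪s x, y⟫ = ⟪x, s y⟫ := refl_adj hα0 s hs
  have h1 : ub.symm = uc.symm.trans s := by
    have h := congrArg ExtElem.w hmul
    simpa [piE, ExtElem.we, ExtElem.mul] using h
  have h2 : ub b = uc c := by
    have h := congrArg ExtElem.b hmul
    simpa [piE, ExtElem.we, ExtElem.mul] using h
  have hsymm_eq : ∀ z, ub.symm z = s (uc.symm z) := by
    intro z; rw [h1]; rfl
  have hub_apply : ∀ z, ub z = uc (s z) := by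
    intro z
    have h3 : ub.symm (uc (s z)) = z := by
      rw [hsymm_eq, LinearIsometryEquiv.symm_apply_apply, hs2]
    have h4 := congrArg ub h3
    rw [LinearIsometryEquiv.apply_symm_apply] at h4
    exact h4.symm
  have hbsc : b = s c := by
    have h3 : uc (s b) = uc c := by rw [← hub_apply]; exact h2
    have h4 : s b = c := uc.injective h3
    rw [← h4, hs2]
  have hWuc := weyl_preserves h0 hrefl uc huc.1
  have hucαiR : uc αi ∈ R := hWuc.1 αi hαiR
  set m := ⟪αi, c⟫ with hm
  obtain ⟨j₀, hj₀⟩ := hc αi hαiR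
  have negpair : ∀ (x : V n) (r : ℝ), -((x, r) : V n × ℝ) = (-x, -r) := fun _ _ => rfl
  have hact_c : ∀ (z : V n) (t : ℝ),
      ExtElem.act (piE uc c) (z, t) = (uc.symm z, t - ⟪z, uc c⟫) := fun _ _ => rfl
  have hact_b : ∀ (z : V n) (t : ℝ),
      ExtElem.act (piE ub b) (z, t) = (s (uc.symm z), t - ⟪z, uc c⟫) := by
    intro z t
    show (ub.symm z, t - ⟪z, ub b⟫) = _
    rw [hsymm_eq, h2]
  have hkey : 0 < m ∨ (m = 0 ∧ uc αi ∈ Rplus) := by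
    by_contra hbad
    push_neg at hbad
    obtain ⟨hm0, hm1⟩ := hbad
    -- q' = (-(uc αi), -m) is an extra element of λ(π_c)
    have hq'Aff : ((-(uc αi) : V n), -m) ∈ AffPlus R Rplus := by
      rw [mem_AffPlus_iff]
      refine ⟨hnegR _ hucαiR, ⟨-j₀, ?_⟩, ?_⟩
      · rw [nuv_neg, nuv_map]
        push_cast
        linarith [hj₀]
      · rcases lt_or_eq_of_le hm0 with h | h
        · exact Or.inl (by linarith)
        · refine Or.inr ⟨by rw [h, neg_zero], ?_⟩
          have h3 : uc αi ∉ Rplus := hm1 h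
          have h4 := hucαiR
          rw [hR] at h4
          rcases h4 with h4 | h4
          · exact absurd h4 h3
          · exact Set.mem_neg.mp h4
    have haff_ai : ((αi : V n), (0 : ℝ)) ∈ AffPlus R Rplus :=
      (mem_AffPlus_iff αi 0).mpr ⟨hαiR, ⟨0, by norm_num⟩, Or.inr ⟨rfl, hαi⟩⟩
    have hq'act : ExtElem.act (piE uc c) ((-(uc αi) : V n), -m) = ((-αi : V n), 0) := by
      rw [hact_c]
      have e1 : uc.symm (-(uc αi)) = -αi := by
        rw [map_neg, LinearIsometryEquiv.symm_apply_apply]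
      have e2 : -m - ⟪-(uc αi), uc c⟫ = 0 := by
        rw [inner_neg_left, LinearIsometryEquiv.inner_map_map]
        rw [hm]; ring
      rw [e1, e2]
    have hq'Lc : ((-(uc αi) : V n), -m) ∈ lamSet R Rplus (piE uc c) := by
      refine ⟨hq'Aff, ?_⟩
      show ExtElem.act (piE uc c) _ ∈ -AffPlus R Rplus
      rw [hq'act, Set.mem_neg, negpair, neg_neg, neg_zero]
      exact haff_ai
    have hq'notLb : ((-(uc αi) : V n), -m) ∉ lamSet R Rplus (piE ub b) := by
      rintro ⟨-, habs⟩
      have hact : ExtElem.act (piE ub b) ((-(uc αi) : V n), -m) = ((αi : V n), 0) := by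
        rw [hact_b]
        have e1 : s (uc.symm (-(uc αi))) = αi := by
          rw [map_neg, LinearIsometryEquiv.symm_apply_apply, map_neg, hsααi, neg_neg]
        have e2 : -m - ⟪-(uc αi), uc c⟫ = 0 := by
          rw [inner_neg_left, LinearIsometryEquiv.inner_map_map]
          rw [hm]; ring
        rw [e1, e2]
      have habs2 : ExtElem.act (piE ub b) ((-(uc αi) : V n), -m) ∈ -AffPlus R Rplus := habs
      rw [hact, Set.mem_neg, negpair, neg_zero, mem_AffPlus_iff] at habs2
      obtain ⟨-, -, h3⟩ := habs2
      rcases h3 with h3 | ⟨-, h3⟩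
      · norm_num at h3
      · exact Set.disjoint_left.mp hdisj hαi (Set.mem_neg.mpr h3)
    -- λ(π_b) ⊆ λ(π_c)
    have hsub : lamSet R Rplus (piE ub b) ⊆ lamSet R Rplus (piE uc c) := by
      rintro ⟨z, t⟩ ⟨hp1, hp2⟩
      have hp1x := (mem_AffPlus_iff (R := R) (Rplus := Rplus) z t).mp hp1
      have hzR : z ∈ R := hp1x.1
      have hwR : uc.symm z ∈ R := hWuc.2 z hzR
      refine ⟨hp1, ?_⟩
      show ExtElem.act (piE uc c) _ ∈ -AffPlus R Rplus
      rw [hact_c, Set.mem_neg, negpair, mem_AffPlus_iff]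
      have hp2x : ExtElem.act (piE ub b) (z, t) ∈ -AffPlus R Rplus := hp2
      rw [hact_b, Set.mem_neg, negpair, mem_AffPlus_iff] at hp2x
      obtain ⟨hA1, ⟨j, hj⟩, hA3⟩ := hp2x
      refine ⟨hnegR _ hwR, ⟨j, ?_⟩, ?_⟩
      · rw [nuv_neg]
        rw [nuv_neg, nuv_map] at hj
        exact hj
      · rcases hA3 with h | ⟨h, hmem⟩
        · exact Or.inl h
        · refine Or.inr ⟨h, ?_⟩
          by_cases hcase : -(uc.symm z) ∈ Rplus
          · exact hcase
          · exfalso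
            have hwplus : uc.symm z ∈ Rplus := by
              have hwR2 := hwR
              rw [hR] at hwR2
              rcases hwR2 with h' | h'
              · exact h'
              · exact absurd (Set.mem_neg.mp h') hcase
            have hsw : uc.symm z - pairv (uc.symm z) αi • αi ∈ -Rplus := by
              have h3 : s (uc.symm z) ∈ -Rplus := Set.mem_neg.mpr hmem
              rwa [hs] at h3
            have hzw : uc (uc.symm z) = z := uc.apply_symm_apply z
            rcases simple_perm hR h0 hrefl hcart v hv αi hαi hαi_simple hwplus hsw
              with hwa | hwa
            · -- uc.symm z = αi
              have hz : z = uc αi := by rw [← hzw, hwa]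
              have h5 : ⟪z, uc c⟫ = m := by
                rw [hz, LinearIsometryEquiv.inner_map_map, hm]
              have ht : t = m := by linarith [h, h5]
              obtain ⟨-, -, h6⟩ := hp1x
              rcases h6 with h6 | ⟨h6, h7⟩
              · rw [ht] at h6; linarith
              · rw [ht] at h6
                exact (hm1 h6) (hz ▸ h7)
            · -- uc.symm z = 2 • αi
              have hz : z = (2 : ℝ) • uc αi := by
                rw [← hzw, hwa, map_smul]
              have h5 : ⟪z, uc c⟫ = 2 * m := by
                rw [hz, real_inner_smul_left, LinearIsometryEquiv.inner_map_map, hm]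
              have ht : t = 2 * m := by linarith [h, h5]
              obtain ⟨-, -, h6⟩ := hp1x
              rcases h6 with h6 | ⟨h6, h7⟩
              · rw [ht] at h6; linarith
              · have hmz : m = 0 := by rw [ht] at h6; linarith
                have hvz := hv _ h7
                rw [hz, real_inner_smul_right] at hvz
                exact (hm1 hmz) (hsignpos _ hucαiR (by linarith))
    -- λ(π_c) is finite
    have hLcfin : (lamSet R Rplus (piE uc c)).Finite := by
      have hbig : (⋃ β ∈ R, ((fun j : ℤ => ((β, nuv β * (j : ℝ)) : V n × ℝ)) ''
          (Set.Icc (0 : ℤ) ⌈⟪β, uc c⟫ / nuv β⌉))).Finite :=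
        Set.Finite.biUnion hfin (fun β _ => ((Set.finite_Icc _ _).image _))
      refine Set.Finite.subset hbig ?_
      rintro ⟨z, t⟩ ⟨hp1, hp2⟩
      obtain ⟨hzR, ⟨j, hj⟩, h3⟩ := (mem_AffPlus_iff (R := R) (Rplus := Rplus) z t).mp hp1
      have hz0 : z ≠ 0 := fun h => h0 (h ▸ hzR)
      have hnu : 0 < nuv z := by unfold nuv; linarith [inner_self_pos' hz0]
      have ht0 : 0 ≤ t := by rcases h3 with h | ⟨h, -⟩ <;> linarith
      have hp2x : ExtElem.act (piE uc c) (z, t) ∈ -AffPlus R Rplus := hp2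
      rw [hact_c, Set.mem_neg, negpair, mem_AffPlus_iff] at hp2x
      obtain ⟨-, -, h4⟩ := hp2x
      have htle : t ≤ ⟪z, uc c⟫ := by rcases h4 with h | ⟨h, -⟩ <;> linarith
      have hj0 : 0 ≤ j := by
        by_contra hneg
        push_neg at hneg
        have hneg2 : j ≤ -1 := by omega
        have hjr : (j : ℝ) ≤ -1 := by exact_mod_cast hneg2
        nlinarith
      have hjle : j ≤ ⌈⟪z, uc c⟫ / nuv z⌉ := by
        have hle : (j : ℝ) ≤ ⟪z, uc c⟫ / nuv z := by
          rw [le_div_iff₀ hnu]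
          nlinarith [hj]
        exact_mod_cast hle.trans (Int.le_ceil _)
      simp only [Set.mem_iUnion, Set.mem_image]
      exact ⟨z, hzR, j, Set.mem_Icc.mpr ⟨hj0, hjle⟩, by rw [hj]⟩
    have hLbfin : (lamSet R Rplus (piE ub b)).Finite := hLcfin.subset hsub
    have hins : insert ((-(uc αi) : V n), -m) (lamSet R Rplus (piE ub b))
        ⊆ lamSet R Rplus (piE uc c) := Set.insert_subset_iff.mpr ⟨hq'Lc, hsub⟩
    have hcard := Set.ncard_le_ncard hins hLcfin
    rw [Set.ncard_insert_of_notMem hq'notLb hLbfin] at hcard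
    unfold len at hlen
    omega
  have hmpos : 0 < m := by
    rcases hkey with h | ⟨hm0', hplus⟩
    · exact h
    · exfalso
      have hubαi : ub αi ∈ -Rplus := by
        rw [hub_apply, hsααi, map_neg, Set.mem_neg, neg_neg]
        exact hplus
      refine hub.2.2 αi hαi hubαi ?_
      rw [hbsc, ← hsadj αi c, hsααi, inner_neg_left, ← hm, hm0', neg_zero]
  have hcm : ⟪c, αi⟫ = m := by rw [hm, real_inner_comm c αi]
  have hucαineg : uc αi ∈ -Rplus := by
    have h4 := hucαiR
    rw [hR] at h4
    rcases h4 with h4 | h4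
    · exfalso
      have h5 := huc.2.1 _ h4
      rw [LinearIsometryEquiv.inner_map_map] at h5
      linarith [hcm]
    · exact h4
  refine ⟨hbsc, h2, hub_apply, hucαineg, ?_, ?_⟩
  · unfold pairv
    rw [LinearIsometryEquiv.inner_map_map, LinearIsometryEquiv.inner_map_map]
  · unfold pairv
    apply div_pos
    · linarith [hcm]
    · exact ha
end

section
/- Let c_− ∈ P_− and u ∈ W with u(θ) ∈ R_− such that c' = c_− + u(θ) ∈ P_−, where θ is the highest short root. Then there exists c in the W-orbit of c_− such that c' = c_− − u_c(θ) = b_− where b = θ + s_θ(c), i.e., c' can be reached from c_− by a single 'arrow' of type (ii) (application of the affine simple reflection s₀ in the π-decomposition). -/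
/-!
Write `β = -u(θ)`, so that `c' = c₋ - β` and `β` lies in the `W`-orbit of `θ`. Among the
`w ∈ W` with `w β = θ` choose one with the fewest inversions. If an inversion `δ` of `w` were
orthogonal to `β`, then `w s_δ` would still send `β` to `θ` but have fewer inversions; so
every inversion of `w` pairs nontrivially with `β`. Put `c = w c₋` and `v = w⁻¹`. An inversion
`α` of `v` orthogonal to `c` gives the inversion `δ = -v α` of `w` orthogonal to `c₋`, and then
`(δ, β) ≤ 0` by dominance of `θ`, while `(δ, β) ≥ 0` by antidominance of `c₋ - β`: a
contradiction. Finally `v s_θ` sends `θ + s_θ(c)` to `v(c - θ) = c₋ - v θ = c'`.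
-/

open scoped RealInnerProductSpace Pointwise BigOperators

variable {n : ℕ}

noncomputable def rootReflection (α : V n) : V n ≃ₗᵢ[ℝ] V n :=
  Submodule.reflection (ℝ ∙ α)ᗮ

lemma rootReflection_apply (α z : V n) : rootReflection α z = z - pairv z α • α := by
  rw [rootReflection, Submodule.reflection_orthogonal_apply, Submodule.reflection_singleton_apply,
    pairv, RCLike.ofReal_real_eq_id, id_eq, ← real_inner_self_eq_norm_sq, real_inner_comm,
    neg_sub, two_nsmul, ← two_smul ℝ, smul_smul, mul_div_assoc]

lemma rootReflection_rootReflection (α z : V n) : rootReflection α (rootReflection α z) = z :=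
  Submodule.reflection_reflection _ z

lemma rootReflection_symm (α : V n) : (rootReflection α).symm = rootReflection α :=
  Submodule.reflection_symm

lemma rootReflection_self (α : V n) : rootReflection α α = -α :=
  Submodule.reflection_orthogonalComplement_singleton_eq_neg α

lemma rootReflection_of_inner_eq_zero {α z : V n} (h : ⟪z, α⟫ = 0) : rootReflection α z = z := by
  simp [rootReflection_apply, pairv, h]

lemma pairv_of_inner_self_eq_two {α : V n} (hα : ⟪α, α⟫ = 2) (z : V n) :
    pairv z α = ⟪z, α⟫ := by
  rw [pairv, hα]; ring

lemma isReflection_iff {R : Set (V n)} {g : V n ≃ₗᵢ[ℝ] V n} :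
    IsReflection R g ↔ ∃ α ∈ R, g = rootReflection α := by
  simp only [IsReflection, LinearIsometryEquiv.ext_iff, rootReflection_apply]

lemma rootReflection_mem_weyl {R : Set (V n)} {α : V n} (hα : α ∈ R) :
    rootReflection α ∈ Weyl R :=
  Subgroup.subset_closure (isReflection_iff.2 ⟨α, hα, rfl⟩)

lemma Weyl.apply_mem {R : Set (V n)} (hrefl : ∀ α ∈ R, ∀ β ∈ R, β - pairv β α • α ∈ R)
    {g : V n ≃ₗᵢ[ℝ] V n} (hg : g ∈ Weyl R) {γ : V n} (hγ : γ ∈ R) : g γ ∈ R := by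
  induction hg using Subgroup.closure_induction'' generalizing γ with
  | mem x hx =>
    obtain ⟨α, hα, rfl⟩ := isReflection_iff.1 hx
    rw [rootReflection_apply]; exact hrefl α hα γ hγ
  | inv_mem x hx =>
    obtain ⟨α, hα, rfl⟩ := isReflection_iff.1 hx
    rw [LinearIsometryEquiv.coe_inv, rootReflection_symm, rootReflection_apply]
    exact hrefl α hα γ hγ
  | one => exact hγ
  | mul x y _ _ hx hy => exact hx (hy hγ)

def inversionSet (Rplus : Set (V n)) (w : V n ≃ₗᵢ[ℝ] V n) : Set (V n) :=
  {γ ∈ Rplus | w γ ∈ -Rplus}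

section PositiveSystem

variable {R Rplus : Set (V n)} {z : V n}

lemma inner_neg_of_mem_neg (hz : ∀ α ∈ Rplus, 0 < ⟪z, α⟫)
    {x : V n} (hx : x ∈ -Rplus) : ⟪z, x⟫ < 0 := by
  have := hz _ (Set.mem_neg.1 hx)
  rw [inner_neg_right] at this; linarith

lemma mem_neg_iff_inner_neg (hR : R = Rplus ∪ -Rplus)
    (hz : ∀ α ∈ Rplus, 0 < ⟪z, α⟫) {x : V n} (hx : x ∈ R) : x ∈ -Rplus ↔ ⟪z, x⟫ < 0 := by
  refine ⟨inner_neg_of_mem_neg hz, fun h => ?_⟩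
  rcases hR ▸ hx with hx | hx
  · exact absurd (hz x hx) h.not_gt
  · exact hx

variable {w : V n ≃ₗᵢ[ℝ] V n} {δ : V n}

lemma mem_inversionSet_of_rootReflection_not_mem (hR : R = Rplus ∪ -Rplus)
    (hz : ∀ α ∈ Rplus, 0 < ⟪z, α⟫) (hrefl : ∀ α ∈ R, ∀ β ∈ R, β - pairv β α • α ∈ R)
    (hw : ∀ γ ∈ R, w γ ∈ R) (hδ : δ ∈ inversionSet Rplus w) {γ : V n} (hγ : γ ∈ Rplus)
    (hsγ : rootReflection δ γ ∉ Rplus) (hwsγ : w (rootReflection δ γ) ∈ -Rplus) :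
    γ ∈ inversionSet Rplus w := by
  have hγR : γ ∈ R := hR ▸ Or.inl hγ
  have hsγR : rootReflection δ γ ∈ R := by
    rw [rootReflection_apply]; exact hrefl δ (hR ▸ Or.inl hδ.1) γ hγR
  have hsγ_neg := inner_neg_of_mem_neg hz ((hR ▸ hsγR : _ ∈ Rplus ∪ -Rplus).resolve_left hsγ)
  have hpair : 0 < pairv γ δ := by
    rw [rootReflection_apply, inner_sub_right, real_inner_smul_right] at hsγ_neg
    nlinarith [hz γ hγ, hz δ hδ.1]
  -- a positive combination of two negative roots, as `(γ, δ∨) > 0`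
  have hwγ : w γ = w (rootReflection δ γ) + pairv γ δ • w δ := by
    rw [rootReflection_apply, map_sub, map_smul]; abel
  refine ⟨hγ, (mem_neg_iff_inner_neg hR hz (hw γ hγR)).2 ?_⟩
  rw [hwγ, inner_add_right, real_inner_smul_right]
  nlinarith [inner_neg_of_mem_neg hz hwsγ, inner_neg_of_mem_neg hz hδ.2]

lemma ncard_inversionSet_mul_rootReflection_lt (hfin : R.Finite) (hR : R = Rplus ∪ -Rplus)
    (hz : ∀ α ∈ Rplus, 0 < ⟪z, α⟫) (hrefl : ∀ α ∈ R, ∀ β ∈ R, β - pairv β α • α ∈ R)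
    (hw : ∀ γ ∈ R, w γ ∈ R) (hδ : δ ∈ inversionSet Rplus w) :
    (inversionSet Rplus (w * rootReflection δ)).ncard < (inversionSet Rplus w).ncard := by
  classical
  -- Inject the inversions of `w s_δ` into those of `w` other than `δ`.
  set f : V n → V n := fun γ => if rootReflection δ γ ∈ Rplus then rootReflection δ γ else γ
  have hmaps :
      Set.MapsTo f (inversionSet Rplus (w * rootReflection δ)) (inversionSet Rplus w \ {δ}) := by
    rintro γ ⟨hγ, hwsγ⟩
    have hwsγ : w (rootReflection δ γ) ∈ -Rplus := hwsγ
    by_cases hsγ : rootReflection δ γ ∈ Rplus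
    · simp only [f, if_pos hsγ]
      refine ⟨⟨hsγ, hwsγ⟩, fun hδγ => ?_⟩
      have : γ = -δ := by rw [← rootReflection_rootReflection δ γ, hδγ, rootReflection_self]
      exact (hz γ hγ).not_gt (this ▸ inner_neg_of_mem_neg hz (by simpa using hδ.1))
    · simp only [f, if_neg hsγ]
      refine ⟨mem_inversionSet_of_rootReflection_not_mem hR hz hrefl hw hδ hγ hsγ hwsγ,
        fun hδγ => ?_⟩
      rw [Set.mem_singleton_iff.1 hδγ, rootReflection_self, map_neg] at hwsγ
      exact (inner_neg_of_mem_neg hz hδ.2).not_gt (by simpa using inner_neg_of_mem_neg hz hwsγ)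
  have hinj : Set.InjOn f (inversionSet Rplus (w * rootReflection δ)) := by
    rintro γ₁ ⟨h₁, -⟩ γ₂ ⟨h₂, -⟩ heq
    by_cases hs₁ : rootReflection δ γ₁ ∈ Rplus <;> by_cases hs₂ : rootReflection δ γ₂ ∈ Rplus <;>
      simp only [f, hs₁, hs₂, if_true, if_false] at heq
    · rw [← rootReflection_rootReflection δ γ₁, heq, rootReflection_rootReflection]
    · exact absurd (by rw [← heq, rootReflection_rootReflection]; exact h₁) hs₂
    · exact absurd (by rw [heq, rootReflection_rootReflection]; exact h₂) hs₁
    · exact heq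
  have hfinw : (inversionSet Rplus w).Finite := hfin.subset fun γ hγ => hR ▸ Or.inl hγ.1
  calc (inversionSet Rplus (w * rootReflection δ)).ncard ≤ (inversionSet Rplus w \ {δ}).ncard :=
        Set.ncard_le_ncard_of_injOn f hmaps hinj (hfinw.subset Set.sdiff_subset)
    _ < (inversionSet Rplus w).ncard := Set.ncard_sdiff_singleton_lt_of_mem hδ hfinw

lemma exists_weyl_apply_eq_forall_inversionSet_inner_ne_zero
    (hfin : R.Finite) (hR : R = Rplus ∪ -Rplus) (hz : ∀ α ∈ Rplus, 0 < ⟪z, α⟫)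
    (hrefl : ∀ α ∈ R, ∀ β ∈ R, β - pairv β α • α ∈ R) {x y : V n}
    (hxy : ∃ w ∈ Weyl R, w y = x) :
    ∃ w ∈ Weyl R, w y = x ∧ ∀ δ ∈ inversionSet Rplus w, ⟪δ, y⟫ ≠ 0 := by
  obtain ⟨w, ⟨hw, hwy⟩, hmin⟩ := (measure fun w => (inversionSet Rplus w).ncard).wf.has_min
    {w | w ∈ Weyl R ∧ w y = x} hxy
  refine ⟨w, hw, hwy, fun δ hδ hδy => hmin (w * rootReflection δ) ⟨?_, ?_⟩ ?_⟩
  · exact mul_mem hw (rootReflection_mem_weyl (hR ▸ Or.inl hδ.1))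
  · rw [LinearIsometryEquiv.coe_mul, Function.comp_apply,
      rootReflection_of_inner_eq_zero (by rwa [real_inner_comm]), hwy]
  · exact ncard_inversionSet_mul_rootReflection_lt hfin hR hz hrefl
      (fun γ hγ => Weyl.apply_mem hrefl hw hγ) hδ

end PositiveSystem

theorem orbit_theta_arrow_general (n : ℕ) (R Rplus : Set (V n))
    (hfin : R.Finite) (hR : R = Rplus ∪ (-Rplus))
    (hrefl : ∀ α ∈ R, ∀ β ∈ R, β - pairv β α • α ∈ R)
    (hpos : ∃ v : V n, ∀ α ∈ Rplus, 0 < ⟪v, α⟫)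
    -- `θ`: the highest short root (the dominant short positive root)
    (θ : V n) (hθ : θ ∈ Rplus) (hθ2 : ⟪θ, θ⟫ = 2)
    (hθdom : ∀ α ∈ Rplus, 0 ≤ ⟪θ, α⟫)
    (cminus : V n)
    (u : V n ≃ₗᵢ[ℝ] V n) (hu : u ∈ Weyl R)
    (hc' : ∀ α ∈ Rplus, ⟪cminus + u θ, α⟫ ≤ 0) :
    ∃ c : V n, ∃ v : V n ≃ₗᵢ[ℝ] V n, v ∈ Weyl R ∧
      v c = cminus ∧
      (∀ α ∈ Rplus, v α ∈ -Rplus → ⟪α, c⟫ ≠ 0) ∧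
      cminus + u θ = cminus - v θ ∧
      (∃ w ∈ Weyl R, w (θ + (c - ⟪c, θ⟫ • θ)) = cminus + u θ) := by
  obtain ⟨z, hz⟩ := hpos
  have hθR : θ ∈ R := hR ▸ Or.inl hθ
  obtain ⟨w, hw, hwθ, hinv⟩ := exists_weyl_apply_eq_forall_inversionSet_inner_ne_zero hfin hR hz
    hrefl (x := θ) (y := -u θ) ⟨rootReflection θ * u⁻¹,
      mul_mem (rootReflection_mem_weyl hθR) (inv_mem hu), by simp [rootReflection_self]⟩
  have hvθ : w.symm θ = -u θ := w.symm_apply_eq.2 hwθ.symm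
  refine ⟨w cminus, w.symm, inv_mem hw, w.symm_apply_apply _, fun α hα hvα hαc => ?_,
    by rw [hvθ, sub_neg_eq_add], w.symm * rootReflection θ,
    mul_mem (inv_mem hw) (rootReflection_mem_weyl hθR), ?_⟩
  · have hδ : -w.symm α ∈ inversionSet Rplus w := ⟨Set.mem_neg.1 hvα, by simpa using hα⟩
    have hδc : ⟪-w.symm α, cminus⟫ = 0 := by
      rw [inner_neg_left, LinearIsometryEquiv.inner_map_eq_flip, w.symm_symm, hαc, neg_zero]
    refine hinv _ hδ (le_antisymm ?_ ?_)
    · rw [← w.inner_map_map, hwθ, map_neg, w.apply_symm_apply, inner_neg_left,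
        real_inner_comm]
      exact neg_nonpos.2 (hθdom α hα)
    · have := hc' _ hδ.1
      rw [inner_add_left, real_inner_comm, hδc, zero_add] at this
      rw [real_inner_comm, inner_neg_left]
      linarith
  · rw [← pairv_of_inner_self_eq_two hθ2, ← rootReflection_apply, LinearIsometryEquiv.coe_mul,
      Function.comp_apply, map_add, rootReflection_self, rootReflection_rootReflection, map_add,
      map_neg, hvθ, w.symm_apply_apply]
    abel

/-- Let `c₋ ∈ P₋` and `u ∈ W` with `u(θ) ∈ R₋` be such that `c' = c₋ + u(θ) ∈ P₋`,
where `θ` is the highest short root.  Then there is a `c` in the `W`-orbit of `c₋`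
such that `c' = c₋ − u_c(θ) = b₋` for `b = θ + s_θ(c)`; i.e. `c'` is reached from `c₋`
by a single arrow of type (ii). -/
theorem orbit_theta_arrow (n : ℕ) (R Rplus : Set (V n))
    (hfin : R.Finite) (hR : R = Rplus ∪ (-Rplus)) (hdisj : Disjoint Rplus (-Rplus))
    (h0 : (0 : V n) ∉ R)
    (hrefl : ∀ α ∈ R, ∀ β ∈ R, β - pairv β α • α ∈ R)
    (hcart : ∀ α ∈ R, ∀ β ∈ R, ∃ m : ℤ, pairv β α = m)
    (hpos : ∃ v : V n, ∀ α ∈ Rplus, 0 < ⟪v, α⟫)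
    (hirr : ∀ S T : Set (V n), S ∪ T = R → (∀ a ∈ S, ∀ b ∈ T, ⟪a, b⟫ = 0) →
      S = ∅ ∨ T = ∅)
    (hshort : ∀ α ∈ R, 2 ≤ ⟪α, α⟫)
    -- `θ`: the highest short root (the dominant short positive root)
    (θ : V n) (hθ : θ ∈ Rplus) (hθ2 : ⟪θ, θ⟫ = 2)
    (hθdom : ∀ α ∈ Rplus, 0 ≤ ⟪θ, α⟫)
    (cminus : V n) (hcm : ∀ α ∈ Rplus, ⟪cminus, α⟫ ≤ 0)
    (u : V n ≃ₗᵢ[ℝ] V n) (hu : u ∈ Weyl R) (huθ : u θ ∈ -Rplus)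
    (hc' : ∀ α ∈ Rplus, ⟪cminus + u θ, α⟫ ≤ 0) :
    ∃ c : V n, ∃ v : V n ≃ₗᵢ[ℝ] V n, v ∈ Weyl R ∧
      v c = cminus ∧
      (∀ α ∈ Rplus, v α ∈ -Rplus → ⟪α, c⟫ ≠ 0) ∧
      cminus + u θ = cminus - v θ ∧
      (∃ w ∈ Weyl R, w (θ + (c - ⟪c, θ⟫ • θ)) = cminus + u θ) :=
  orbit_theta_arrow_general n R Rplus hfin hR hrefl hpos θ hθ hθ2 hθdom cminus u hu hc'
end
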